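/- arXiv:2202.07686 — 6 statements merged into one kernel-verified Lean document; each statement's English description precedes it below -/
import Mathlib

section
/- Let G be a finite group in which every subgroup of order p^d is complemented, and let H ≤ G. Then every subgroup of H of order p^d is complemented in H. -/
open Pointwise

/-- A subgroup `A` of `G` is complemented if there is `K ≤ G` with `G = AK` and `A ∩ K = 1`. -/
def Complemented {G : Type*} [Group G] (A : Subgroup G) : Prop :=
  ∃ K : Subgroup G, (A : Set G) * (K : Set G) = Set.univ ∧ A ⊓ K = ⊥

/-- A complement `K` of `B` in `G` restricts to the complement `K ∩ H` of `B` in `H`. -/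
theorem Complemented.of_map_subtype {G : Type*} [Group G] {H : Subgroup G} {B : Subgroup H}
    (hB : Complemented (B.map H.subtype)) : Complemented B := by
  obtain ⟨K, hmul, hinf⟩ := hB
  refine ⟨K.subgroupOf H, Set.eq_univ_of_forall fun h => ?_, ?_⟩
  · obtain ⟨_, ⟨b, hb, rfl⟩, k, hk, hbk⟩ :
        (h : G) ∈ (B.map H.subtype : Set G) * K := hmul ▸ Set.mem_univ _
    refine ⟨b, hb, b⁻¹ * h, ?_, mul_inv_cancel_left b h⟩
    simpa [Subgroup.mem_subgroupOf, ← hbk] using hk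
  · rw [← Subgroup.map_eq_bot_iff_of_injective _ H.subtype_injective, eq_bot_iff, ← hinf]
    rintro _ ⟨x, ⟨hxB, hxK⟩, rfl⟩
    exact ⟨⟨x, hxB, rfl⟩, hxK⟩

theorem stmt_1_general {G : Type*} [Group G] (p d : ℕ)
    (hG : ∀ A : Subgroup G, Nat.card A = p ^ d → Complemented A)
    (H : Subgroup G) :
    ∀ B : Subgroup H, Nat.card B = p ^ d → Complemented B := fun B hB =>
  Complemented.of_map_subtype <|
    hG _ (by rw [Subgroup.card_map_of_injective H.subtype_injective, hB])

/-- If every subgroup of order `p^d` of a finite group `G` is complemented, and `H ≤ G`,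
then every subgroup of `H` of order `p^d` is complemented in `H`. -/
theorem stmt_1 {G : Type*} [Group G] [Finite G] (p d : ℕ) (hp : p.Prime) (hd : 0 < d)
    (hG : ∀ A : Subgroup G, Nat.card A = p ^ d → Complemented A)
    (H : Subgroup G) :
    ∀ B : Subgroup H, Nat.card B = p ^ d → Complemented B :=
  stmt_1_general p d hG H
end

section
/- Let G be a finite group in which every subgroup of order p^d is complemented, and let N be a normal subgroup of G whose order has p-part p^e with e ≤ d. Then every subgroup of G/N of order p^{d-e} is complemented in G/N. -/
open Pointwise

/-!
Let `H` be the preimage of `B` in `G`. The `p`-part of `|H| = |N| |B|` is `p^d`, so a Sylow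
`p`-subgroup `P` of `H` has a complement `K` in `G`. By Dedekind's law `K ∩ H` complements `P`
in `H`, so `|K ∩ H| = |H : P|` is prime to `p`. The image of `K` in `G/N` complements `B`:
`PK = G` maps onto `G/N`, and `B` meets the image of `K` inside the image of `K ∩ H`, a group of
order prime to `p`, while `|B|` is a power of `p`.
-/

namespace Subgroup

variable {G : Type*} [Group G]

theorem relIndex_eq_card_inf_of_mul_eq_univ {P K H : Subgroup G} (hPH : P ≤ H)
    (hPK : (P : Set G) * (K : Set G) = Set.univ) (hdisj : P ⊓ K = ⊥) :
    P.relIndex H = Nat.card (K ⊓ H : Subgroup G) := by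
  have hcompl : IsComplement' (P.subgroupOf H) ((K ⊓ H).subgroupOf H) := by
    refine isComplement'_of_disjoint_and_mul_eq_univ ?_ ?_
    · rw [disjoint_def]
      intro x hxP hxK
      have : (x : G) ∈ P ⊓ K := ⟨hxP, (mem_subgroupOf.mp hxK).1⟩
      rw [hdisj, mem_bot] at this
      exact Subtype.ext this
    · refine Set.eq_univ_of_forall fun x => ?_
      have hx : (x : G) ∈ (P : Set G) * ↑(K ⊓ H) := by
        rw [mul_inf_assoc P K H hPH, hPK, Set.univ_inter]
        exact x.2
      obtain ⟨a, ha, k, hk, hak⟩ := hx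
      exact ⟨⟨a, hPH ha⟩, ha, ⟨k, hk.2⟩, hk, Subtype.ext hak⟩
  rw [relIndex, hcompl.symm.index_eq_card]
  exact Nat.card_congr (subgroupOfEquivOfLe inf_le_right).toEquiv

theorem exists_le_card_eq_pow_factorization_not_dvd_relIndex [Finite G] (p : ℕ) [Fact p.Prime]
    (H : Subgroup G) :
    ∃ P ≤ H, Nat.card P = p ^ (Nat.card H).factorization p ∧ ¬ p ∣ P.relIndex H := by
  obtain ⟨P₀⟩ : Nonempty (Sylow p H) := inferInstance
  refine ⟨P₀.map H.subtype, map_subtype_le _, ?_, ?_⟩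
  · rw [card_map_of_injective H.subtype_injective, P₀.card_eq_multiplicity]
  · rw [relIndex, subgroupOf, comap_map_eq_self_of_injective H.subtype_injective]
    exact P₀.not_dvd_index

end Subgroup

open Subgroup

theorem Complemented.of_le_comap_of_coprime {G Q : Type*} [Group G] [Group Q] {f : G →* Q}
    (hf : Function.Surjective f) {B : Subgroup Q} {P : Subgroup G} (hP : Complemented P)
    (hPB : P ≤ B.comap f) (hcop : (Nat.card B).Coprime (P.relIndex (B.comap f))) :
    Complemented B := by
  obtain ⟨K, hPK, hdisj⟩ := hP
  refine ⟨K.map f, ?_, ?_⟩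
  · refine Set.eq_univ_of_univ_subset ?_
    calc Set.univ = f '' ((P : Set G) * K) := by rw [hPK, Set.image_univ_of_surjective hf]
      _ = f '' P * f '' K := Set.image_mul f
      _ ⊆ (B : Set Q) * (K.map f : Set Q) :=
        Set.mul_subset_mul_right (Set.image_subset_iff.mpr hPB)
  · have hle : B ⊓ K.map f ≤ (K ⊓ B.comap f).map f := by
      rintro _ ⟨hxB, k, hk, rfl⟩
      exact ⟨k, ⟨hk, hxB⟩, rfl⟩
    rw [relIndex_eq_card_inf_of_mul_eq_univ hPB hPK hdisj] at hcop
    have hdisjB : Disjoint B ((K ⊓ B.comap f).map f) :=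
      disjoint_of_coprime_natCard (hcop.coprime_dvd_right (card_map_dvd _ _))
    exact eq_bot_iff.mpr fun x hx => hdisjB.le_bot ⟨hx.1, hle hx⟩

theorem stmt_2_general {G : Type*} [Group G] [Finite G] (p d e : ℕ) (hp : p.Prime)
    (hG : ∀ A : Subgroup G, Nat.card A = p ^ d → Complemented A)
    (N : Subgroup G) [N.Normal] (hN : (Nat.card N).factorization p = e) (he : e ≤ d) :
    ∀ B : Subgroup (G ⧸ N), Nat.card B = p ^ (d - e) → Complemented B := by
  intro B hB
  have : Fact p.Prime := ⟨hp⟩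
  set H := B.comap (QuotientGroup.mk' N)
  have hcardH : Nat.card H = Nat.card N * Nat.card B := QuotientGroup.card_preimage_mk N B
  have hfactH : (Nat.card H).factorization p = d := by
    rw [hcardH, Nat.factorization_mul Nat.card_pos.ne' Nat.card_pos.ne', Finsupp.add_apply, hN, hB,
      hp.factorization_pow, Finsupp.single_eq_same]
    omega
  obtain ⟨P, hPH, hPcard, hPindex⟩ := exists_le_card_eq_pow_factorization_not_dvd_relIndex p H
  rw [hfactH] at hPcard
  refine (hG P hPcard).of_le_comap_of_coprime (QuotientGroup.mk'_surjective N) hPH ?_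
  rw [hB]
  exact (hp.coprime_iff_not_dvd.mpr hPindex).pow_left _

/-- If every subgroup of order `p^d` of a finite group `G` is complemented and `N ⊴ G`
has `p`-part of its order equal to `p^e` with `e ≤ d`, then every subgroup of `G/N`
of order `p^(d-e)` is complemented in `G/N`. -/
theorem stmt_2 {G : Type*} [Group G] [Finite G] (p d e : ℕ) (hp : p.Prime) (hd : 0 < d)
    (hG : ∀ A : Subgroup G, Nat.card A = p ^ d → Complemented A)
    (N : Subgroup G) [N.Normal] (hN : (Nat.card N).factorization p = e) (he : e ≤ d) :
    ∀ B : Subgroup (G ⧸ N), Nat.card B = p ^ (d - e) → Complemented B :=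
  stmt_2_general p d e hp hG N hN he
end

section
/- Let G be a finite group and N a normal p'-subgroup of G (i.e., p does not divide |N|). Then every subgroup of G of order p^d is complemented in G if and only if every subgroup of G/N of order p^d is complemented in G/N. -/
/-!
A subgroup `A` of order `p^d` meets the `p'`-group `N` trivially, so it maps isomorphically
onto its image under `π : G → G ⧸ N`, and every subgroup of `G ⧸ N` of order `p^d` arises this way (from a
subgroup of order `p^d` of its preimage, by Sylow). A complement of `π A` pulls back to a
complement of `A`. Conversely, a complement `K` of `A` has index `p^d`, coprime to `|N|`, so
`N ≤ K`, and then `π K` is a complement of `π A`.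
-/

open Pointwise

namespace Subgroup

variable {G H : Type*} [Group G] [Group H]

theorem card_map_of_disjoint_ker {f : G →* H} {A : Subgroup G} (h : Disjoint A f.ker) :
    Nat.card (A.map f) = Nat.card A := by
  rw [← relIndex_ker, ← inf_relIndex_right, inf_comm, disjoint_iff.mp h, relIndex_bot_left]

theorem le_of_coprime_card_index [Finite G] {N K : Subgroup G} [N.Normal]
    (h : (Nat.card N).Coprime K.index) : N ≤ K := by
  -- `[K ⊔ N : K] = [N : N ⊓ K]` divides both `|N|` and `[G : K]`
  have hdvd_card : K.relIndex (K ⊔ N) ∣ Nat.card N := by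
    have hK_sup := relIndex_mul_relIndex ⊥ K (K ⊔ N) bot_le le_sup_left
    have hN_sup := relIndex_mul_relIndex ⊥ N (K ⊔ N) bot_le le_sup_right
    have hinf_K := relIndex_mul_relIndex ⊥ (N ⊓ K) K bot_le inf_le_right
    rw [relIndex_sup_right, ← hK_sup, ← hinf_K, inf_relIndex_right] at hN_sup
    simp only [relIndex_bot_left] at hN_sup
    have hr : N.relIndex K ≠ 0 := ne_zero_of_dvd_ne_zero Nat.card_pos.ne' (relIndex_dvd_card N K)
    refine ⟨Nat.card ↥(N ⊓ K), Nat.eq_of_mul_eq_mul_right (Nat.pos_of_ne_zero hr) ?_⟩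
    rw [hN_sup]
    ring
  have h1 := Nat.eq_one_of_dvd_coprimes h hdvd_card (relIndex_dvd_index_of_le le_sup_left)
  exact le_sup_right.trans (relIndex_eq_one.mp h1)

theorem exists_card_eq_prime_pow_map_eq [Finite G] {f : G →* H} (hf : Function.Surjective f)
    {p d : ℕ} [Fact p.Prime] (hcop : (Nat.card f.ker).Coprime (p ^ d)) {B : Subgroup H}
    (hB : Nat.card B = p ^ d) : ∃ A : Subgroup G, Nat.card A = p ^ d ∧ A.map f = B := by
  have : Finite H := Finite.of_surjective f hf
  have hdvd : p ^ d ∣ Nat.card (B.comap f) := by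
    simpa only [map_comap_eq_self_of_surjective hf, hB] using card_map_dvd (B.comap f) f
  obtain ⟨A, hA⟩ := Sylow.exists_subgroup_card_pow_prime p hdvd
  have hcard : Nat.card (A.map (B.comap f).subtype) = p ^ d := by
    rw [card_map_of_injective (subtype_injective _), hA]
  refine ⟨_, hcard, eq_of_le_of_card_ge ?_ ?_⟩
  · exact map_le_iff_le_comap.mpr (map_subtype_le A)
  · rw [card_map_of_disjoint_ker (disjoint_of_coprime_natCard (hcard ▸ hcop.symm)), hcard, hB]

end Subgroup

namespace Complemented

open Subgroup

variable {G H : Type*} [Group G] [Group H]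

theorem of_map {f : G →* H} {A : Subgroup G} (hA : Disjoint A f.ker)
    (h : Complemented (A.map f)) : Complemented A := by
  obtain ⟨K, hmul, hinf⟩ := h
  refine ⟨K.comap f, Set.eq_univ_of_forall fun g => ?_, ?_⟩
  · obtain ⟨_, ⟨a, ha, rfl⟩, k, hk, hak⟩ := hmul.symm ▸ Set.mem_univ (f g)
    refine ⟨a, ha, a⁻¹ * g, ?_, mul_inv_cancel_left a g⟩
    simpa [mem_comap, ← hak] using hk
  · rw [eq_bot_iff]
    rintro x ⟨hxA, hxK⟩
    have : f x ∈ A.map f ⊓ K := ⟨mem_map_of_mem f hxA, hxK⟩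
    rw [hinf, mem_bot] at this
    exact disjoint_iff.mp hA ▸ ⟨hxA, this⟩

theorem map [Finite G] {f : G →* H} (hf : Function.Surjective f) {A : Subgroup G}
    (hcop : (Nat.card f.ker).Coprime (Nat.card A)) (h : Complemented A) :
    Complemented (A.map f) := by
  obtain ⟨K, hmul, hinf⟩ := h
  have hker : f.ker ≤ K := le_of_coprime_card_index <| by
    rwa [(isComplement'_of_disjoint_and_mul_eq_univ (disjoint_iff.mpr hinf) hmul).index_eq_card]
  refine ⟨K.map f, ?_, ?_⟩
  · rw [coe_map, coe_map, ← Set.image_mul, hmul, Set.image_univ_of_surjective hf]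
  · rw [eq_bot_iff]
    rintro _ ⟨⟨a, ha, rfl⟩, k, hk, hka⟩
    have haK : a ∈ K := by
      simpa using mul_mem hk (hker (show k⁻¹ * a ∈ f.ker by simp [MonoidHom.mem_ker, hka]))
    have : a ∈ A ⊓ K := ⟨ha, haK⟩
    rw [hinf, mem_bot] at this
    simp [this]

end Complemented

theorem stmt_3_general {G : Type*} [Group G] [Finite G] (p d : ℕ) (hp : p.Prime)
    (N : Subgroup G) [N.Normal] (hN : ¬ p ∣ Nat.card N) :
    (∀ A : Subgroup G, Nat.card A = p ^ d → Complemented A) ↔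
      (∀ B : Subgroup (G ⧸ N), Nat.card B = p ^ d → Complemented B) := by
  have := Fact.mk hp
  have hπ : Function.Surjective (QuotientGroup.mk' N) := QuotientGroup.mk'_surjective N
  have hcop : (Nat.card (QuotientGroup.mk' N).ker).Coprime (p ^ d) := by
    rw [QuotientGroup.ker_mk']
    exact ((hp.coprime_iff_not_dvd.mpr hN).pow_left d).symm
  constructor
  · intro h B hB
    obtain ⟨A, hA, rfl⟩ := Subgroup.exists_card_eq_prime_pow_map_eq hπ hcop hB
    exact (h A hA).map hπ (hA ▸ hcop)
  · intro h A hA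
    have hdisj : Disjoint A (QuotientGroup.mk' N).ker :=
      Subgroup.disjoint_of_coprime_natCard (hA ▸ hcop.symm)
    exact (h _ (by rw [Subgroup.card_map_of_disjoint_ker hdisj, hA])).of_map hdisj

/-- If `N` is a normal `p'`-subgroup of a finite group `G`, then every subgroup of `G` of
order `p^d` is complemented in `G` iff every subgroup of `G/N` of order `p^d` is
complemented in `G/N`. -/
theorem stmt_3 {G : Type*} [Group G] [Finite G] (p d : ℕ) (hp : p.Prime) (hd : 0 < d)
    (N : Subgroup G) [N.Normal] (hN : ¬ p ∣ Nat.card N) :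
    (∀ A : Subgroup G, Nat.card A = p ^ d → Complemented A) ↔
      (∀ B : Subgroup (G ⧸ N), Nat.card B = p ^ d → Complemented B) :=
  stmt_3_general p d hp N hN
end

section
/- Let G be a finite group with p^d ≤ |G|_p in which every subgroup of order p^d is complemented. Then for every positive integer m with p^{md} ≤ |G|_p, every subgroup of G of order p^{md} is complemented in G. -/
/-!
Induct on `m`. Given `A` of order `p^((m+1)d)`, pick `B ≤ A` of order `p^(md)` (Sylow) and a
complement `K` of `B`. Then `A ⊓ K` is a complement of `B` inside `A`, so it has order `p^d` and
has a complement `L`. Finally `K ⊓ L` meets `A` trivially and has index at most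
`|G : K| |G : L| = |B| |A ⊓ K| = |A|`, so it is a complement of `A`.
-/

open Pointwise

namespace Subgroup

variable {G : Type*} [Group G]

theorem exists_le_card_eq_prime_pow [Finite G] {p n : ℕ} [Fact p.Prime] {A : Subgroup G}
    (h : p ^ n ∣ Nat.card A) : ∃ B ≤ A, Nat.card B = p ^ n := by
  obtain ⟨B, hB⟩ := Sylow.exists_subgroup_card_pow_prime p h
  exact ⟨B.map A.subtype, map_subtype_le B, by rw [card_map_of_injective A.subtype_injective, hB]⟩

theorem isComplement'_of_disjoint_of_index_le [Finite G] {H K : Subgroup G}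
    (hdisj : Disjoint H K) (hle : K.index ≤ Nat.card H) : IsComplement' H K := by
  refine isComplement'_of_card_mul_and_disjoint (le_antisymm ?_ ?_) hdisj
  · rw [← Nat.card_prod]
    exact Nat.card_le_card_of_injective _ (mul_injective_of_disjoint hdisj)
  · calc Nat.card G = K.index * Nat.card K := (index_mul_card K).symm
      _ ≤ Nat.card H * Nat.card K := Nat.mul_le_mul_right _ hle

/-- Dedekind's modular law: `A = B (A ⊓ K)`. -/
theorem IsComplement'.card_mul_card_inf_of_le {A B K : Subgroup G} (hBK : IsComplement' B K)
    (hBA : B ≤ A) : Nat.card B * Nat.card ↥(A ⊓ K) = Nat.card A := by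
  rw [← Nat.card_prod]
  refine Nat.card_eq_of_bijective (fun x ↦ ⟨x.1 * x.2, A.mul_mem (hBA x.1.2) x.2.2.1⟩) ⟨?_, ?_⟩
  · exact fun x y hxy ↦
      mul_injective_of_disjoint (hBK.disjoint.mono_right inf_le_right) (congrArg Subtype.val hxy)
  · intro a
    obtain ⟨⟨b, k⟩, hbk⟩ := hBK.2 a
    have hkA : (k : G) ∈ A := by
      rw [show (k : G) = b⁻¹ * a from eq_inv_mul_of_mul_eq hbk]
      exact A.mul_mem (A.inv_mem (hBA b.2)) a.2
    exact ⟨(b, ⟨k, hkA, k.2⟩), Subtype.ext hbk⟩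

theorem IsComplement'.isComplement'_inf_of_le [Finite G] {A B K L : Subgroup G}
    (hBK : IsComplement' B K) (hBA : B ≤ A) (hL : IsComplement' (A ⊓ K) L) :
    IsComplement' A (K ⊓ L) := by
  refine isComplement'_of_disjoint_of_index_le ?_ ?_
  · rw [disjoint_iff, ← inf_assoc]
    exact hL.disjoint.eq_bot
  · calc (K ⊓ L).index ≤ K.index * L.index := index_inf_le
      _ = Nat.card A := by
        rw [hBK.index_eq_card, hL.index_eq_card, hBK.card_mul_card_inf_of_le hBA]

end Subgroup

theorem complemented_iff_exists_isComplement' {G : Type*} [Group G] {A : Subgroup G} :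
    Complemented A ↔ ∃ K : Subgroup G, A.IsComplement' K :=
  ⟨fun ⟨K, hmul, hinf⟩ ↦
      ⟨K, Subgroup.isComplement'_of_disjoint_and_mul_eq_univ (disjoint_iff.mpr hinf) hmul⟩,
    fun ⟨K, h⟩ ↦ ⟨K, h.mul_eq, h.disjoint.eq_bot⟩⟩

theorem stmt_4_general {G : Type*} [Group G] [Finite G] (p d : ℕ) (hp : p.Prime)
    (hG : ∀ A : Subgroup G, Nat.card A = p ^ d → Complemented A) :
    ∀ m : ℕ, 0 < m → m * d ≤ (Nat.card G).factorization p →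
      ∀ A : Subgroup G, Nat.card A = p ^ (m * d) → Complemented A := by
  have : Fact p.Prime := ⟨hp⟩
  rintro m hm -
  induction m, hm using Nat.le_induction with
  | base => simpa using hG
  | succ m _ ih =>
    intro A hA
    obtain ⟨B, hBA, hB⟩ := A.exists_le_card_eq_prime_pow (n := m * d)
      (hA ▸ pow_dvd_pow p (Nat.mul_le_mul_right d m.le_succ))
    obtain ⟨K, hBK⟩ := complemented_iff_exists_isComplement'.mp (ih B hB)
    have hAK : Nat.card ↥(A ⊓ K) = p ^ d := by
      have := hBK.card_mul_card_inf_of_le hBA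
      rw [hB, hA, Nat.add_one_mul, pow_add] at this
      exact Nat.eq_of_mul_eq_mul_left (pow_pos hp.pos _) this
    obtain ⟨L, hL⟩ := complemented_iff_exists_isComplement'.mp (hG _ hAK)
    exact complemented_iff_exists_isComplement'.mpr ⟨K ⊓ L, hBK.isComplement'_inf_of_le hBA hL⟩

/-- If `p^d` divides `|G|` (i.e. `p^d ≤ |G|_p`) and every subgroup of order `p^d` is
complemented in `G`, then for every positive integer `m` with `p^(m*d) ≤ |G|_p`, every
subgroup of `G` of order `p^(m*d)` is complemented in `G`. -/
theorem stmt_4 {G : Type*} [Group G] [Finite G] (p d : ℕ) (hp : p.Prime) (hd : 0 < d)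
    (hdvd : d ≤ (Nat.card G).factorization p)
    (hG : ∀ A : Subgroup G, Nat.card A = p ^ d → Complemented A) :
    ∀ m : ℕ, 0 < m → m * d ≤ (Nat.card G).factorization p →
      ∀ A : Subgroup G, Nat.card A = p ^ (m * d) → Complemented A :=
  stmt_4_general p d hp hG
end

section
/- Let G be a finite group with O_{p'}(G) = 1 (the largest normal p'-subgroup is trivial). If a Sylow p-subgroup P of G is elementary abelian, then the Frattini subgroup of G is trivial. -/
/-!
Since `Φ(G)` is nilpotent, each of its Sylow subgroups is characteristic in it and hence normal
in `G`; as `O_{p'}(G) = 1`, `Φ(G)` is a `p`-group and so lies in the abelian Sylow subgroup `P`.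
Being elementary abelian, `P` retracts onto `Φ(G)`, and Gaschütz's averaging over a transversal
of `P` (possible because `[G : P]` is prime to `p`) turns this retraction into a complement `K`
of `Φ(G)` in `G`. But `Φ(G)` consists of non-generators, so `K = G` and `Φ(G) = 1`.
-/

open Subgroup
open scoped IsMulCommutative

theorem MonoidHom.exists_leftInverse_of_injective_of_pow_eq_one {A B : Type*} [CommGroup A]
    [CommGroup B] {p : ℕ} [Fact p.Prime] (hA : ∀ a : A, a ^ p = 1) (ι : B →* A)
    (hι : Function.Injective ι) : ∃ π : A →* B, π.comp ι = MonoidHom.id B := by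
  have hB : ∀ b : B, b ^ p = 1 := fun b => hι (by rw [map_pow, hA, map_one])
  let := AddCommGroup.zmodModule (G := Additive A) (n := p) hA
  let := AddCommGroup.zmodModule (G := Additive B) (n := p) hB
  let f := (MonoidHom.toAdditive ι).toZModLinearMap p
  obtain ⟨g, hg⟩ := f.exists_leftInverse_of_injective (LinearMap.ker_eq_bot.mpr hι)
  exact ⟨MonoidHom.toAdditive.symm g.toAddMonoidHom, MonoidHom.ext fun b => LinearMap.congr_fun hg b⟩

theorem isPGroup_of_isNilpotent {G : Type*} [Group G] [Finite G] {p : ℕ} [Fact p.Prime]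
    (hOp' : ∀ M : Subgroup G, M.Normal → ¬ p ∣ Nat.card M → M = ⊥)
    (N : Subgroup G) [N.Normal] [Group.IsNilpotent N] : IsPGroup p N := by
  refine IsPGroup.of_card
    (Nat.eq_prime_pow_of_unique_prime_dvd Nat.card_pos.ne' fun {q} hq hqN => ?_)
  by_contra hqp
  have : Fact q.Prime := ⟨hq⟩
  obtain ⟨Q⟩ : Nonempty (Sylow q N) := inferInstance
  have := Q.characteristic_of_normal inferInstance
  obtain ⟨k, hk⟩ := IsPGroup.iff_card.mp Q.isPGroup'
  have hQ : (Q : Subgroup N).map N.subtype = ⊥ := by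
    refine hOp' _ ConjAct.normal_of_characteristic_of_normal ?_
    rw [card_map_of_injective N.subtype_injective, hk]
    exact fun hp => hqp
      ((Nat.prime_dvd_prime_iff_eq Fact.out hq).mp (Nat.Prime.dvd_of_dvd_pow Fact.out hp)).symm
  exact Q.ne_bot_of_dvd_card hqN ((map_eq_bot_iff_of_injective _ N.subtype_injective).mp hQ)

namespace Subgroup

variable {G : Type*} [Group G]

theorem exists_isCompl_of_crossedHom {N : Subgroup G} [N.Normal] [IsMulCommutative N] {k : ℕ}
    (hk : (Nat.card N).Coprime k) (θ : G → N)
    (hθ : ∀ g h, θ (g * h) = θ g * MulAut.conjNormal g (θ h)) (hθN : ∀ n : N, θ n = n ^ k) :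
    ∃ K : Subgroup G, IsCompl N K := by
  have hθ_one : θ 1 = 1 := by simpa using hθN 1
  have hconj : ∀ n x : N, MulAut.conjNormal (n : G) x = x := fun n x =>
    Subtype.ext (by rw [MulAut.conjNormal_apply, ← coe_mul, mul_comm, coe_mul, mul_inv_cancel_right])
  let K : Subgroup G :=
    { carrier := {g | θ g = 1}
      one_mem' := hθ_one
      mul_mem' := fun {g h} (hg : θ g = 1) (hh : θ h = 1) => by
        change θ (g * h) = 1
        rw [hθ, hg, hh, map_one, one_mul]
      inv_mem' := fun {g} (hg : θ g = 1) => by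
        have h := hθ g g⁻¹
        rwa [mul_inv_cancel, hθ_one, hg, one_mul, eq_comm, MulEquiv.map_eq_one_iff] at h }
  refine ⟨K, disjoint_def.mpr fun {n} hn (hnK : θ n = 1) => ?_, codisjoint_iff.mpr ?_⟩
  · rw [hθN ⟨n, hn⟩, ← powCoprime_apply hk, ← powCoprime_one hk] at hnK
    exact congrArg Subtype.val ((powCoprime hk).injective hnK)
  · refine eq_top_iff.mpr fun g _ => ?_
    obtain ⟨n, hn⟩ := (powCoprime hk).surjective (θ g)⁻¹
    have hng : θ (n * g) = 1 := by
      rw [hθ, hθN, hconj, ← powCoprime_apply hk, hn, inv_mul_cancel]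
    simpa using mul_mem_sup (inv_mem n.2) (show n * g ∈ K from hng)

variable {P : Subgroup G}

theorem out_inv_mul_smul_out_mem (g : G) (q : G ⧸ P) : (g • q).out⁻¹ * g * q.out ∈ P := by
  rw [mul_assoc, ← QuotientGroup.eq, QuotientGroup.out_eq', ← smul_eq_mul,
    ← MulAction.Quotient.smul_coe, QuotientGroup.out_eq']

noncomputable def outCocycle (g : G) (q : G ⧸ P) : P :=
  ⟨(g • q).out⁻¹ * g * q.out, out_inv_mul_smul_out_mem g q⟩

theorem mul_out_eq_out_mul_outCocycle (g : G) (q : G ⧸ P) :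
    g * q.out = (g • q).out * outCocycle g q := by
  simp [outCocycle, mul_assoc]

theorem outCocycle_mul (g h : G) (q : G ⧸ P) :
    outCocycle (g * h) q = outCocycle g (h • q) * outCocycle h q :=
  Subtype.ext (by simp [outCocycle, mul_smul, mul_assoc])

theorem smul_eq_self_of_mem_of_le {N : Subgroup G} [N.Normal] (hNP : N ≤ P) {n : G} (hn : n ∈ N)
    (q : G ⧸ P) : n • q = q := by
  induction q using QuotientGroup.induction_on with
  | H g =>
    rw [MulAction.Quotient.smul_coe, smul_eq_mul, QuotientGroup.eq, mul_inv_rev]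
    exact hNP (Normal.conj_mem' inferInstance _ (inv_mem hn) g)

theorem conjNormal_apply_eq_self_of_le {N : Subgroup G} [N.Normal] [IsMulCommutative P]
    (hNP : N ≤ P) (x : P) (n : N) : MulAut.conjNormal (x : G) n = n :=
  Subtype.ext (by
    rw [MulAut.conjNormal_apply, mul_inv_eq_iff_eq_mul]
    exact congrArg Subtype.val (mul_comm x (inclusion hNP n)))

section Gaschutz

variable {N : Subgroup G} [N.Normal] [IsMulCommutative N] [Fintype (G ⧸ P)]

noncomputable def gaschutzCocycle (π : P →* N) (g : G) : N :=
  ∏ q : G ⧸ P, MulAut.conjNormal (g • q).out (π (outCocycle g q))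

theorem gaschutzCocycle_mul [IsMulCommutative P] (hNP : N ≤ P) (π : P →* N) (g h : G) :
    gaschutzCocycle π (g * h) =
      gaschutzCocycle π g * MulAut.conjNormal g (gaschutzCocycle π h) := by
  have hq : ∀ q : G ⧸ P, MulAut.conjNormal ((g * h) • q).out (π (outCocycle (g * h) q)) =
      MulAut.conjNormal (g • h • q).out (π (outCocycle g (h • q))) *
        MulAut.conjNormal g (MulAut.conjNormal (h • q).out (π (outCocycle h q))) := by
    intro q
    rw [← MulAut.mul_apply, ← map_mul, mul_out_eq_out_mul_outCocycle, map_mul, MulAut.mul_apply,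
      conjNormal_apply_eq_self_of_le hNP, outCocycle_mul, map_mul, map_mul, mul_smul]
  rw [gaschutzCocycle, Finset.prod_congr rfl fun q _ => hq q, Finset.prod_mul_distrib,
    gaschutzCocycle, gaschutzCocycle, map_prod]
  congr 1
  exact Fintype.prod_equiv (MulAction.toPerm h) _ _ fun q => rfl

theorem gaschutzCocycle_of_mem (hNP : N ≤ P) (π : P →* N)
    (hπ : π.comp (inclusion hNP) = MonoidHom.id N) (n : N) :
    gaschutzCocycle π n = n ^ P.index := by
  have hq : ∀ q : G ⧸ P, MulAut.conjNormal ((n : G) • q).out (π (outCocycle n q)) = n := by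
    intro q
    have hnq := smul_eq_self_of_mem_of_le hNP n.2 q
    have hc : outCocycle (n : G) q = inclusion hNP (MulAut.conjNormal q.out⁻¹ n) :=
      Subtype.ext (by simp [outCocycle, hnq, mul_assoc])
    rw [hc, ← MonoidHom.comp_apply, hπ, MonoidHom.id_apply, hnq, ← MulAut.mul_apply, ← map_mul,
      mul_inv_cancel, map_one, MulAut.one_apply]
  rw [gaschutzCocycle, Finset.prod_congr rfl fun q _ => hq q, Finset.prod_const, Finset.card_univ,
    index_eq_card, Nat.card_eq_fintype_card]

end Gaschutz

theorem exists_isCompl_of_le_of_retraction {N : Subgroup G} [N.Normal] [IsMulCommutative N]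
    [IsMulCommutative P] [P.FiniteIndex] (hNP : N ≤ P) (π : P →* N)
    (hπ : π.comp (inclusion hNP) = MonoidHom.id N) (hcop : (Nat.card N).Coprime P.index) :
    ∃ K : Subgroup G, IsCompl N K :=
  let := P.fintypeQuotientOfFiniteIndex
  exists_isCompl_of_crossedHom hcop (gaschutzCocycle π) (gaschutzCocycle_mul hNP π)
    (gaschutzCocycle_of_mem hNP π hπ)

end Subgroup

/-- If `G` is a finite group with trivial `p'`-core (every normal subgroup of order coprime
to `p` is trivial) and a Sylow `p`-subgroup `P` of `G` is elementary abelian, then the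
Frattini subgroup of `G` is trivial. -/
theorem stmt_6 {G : Type*} [Group G] [Finite G] (p : ℕ) (hp : p.Prime)
    (hOp' : ∀ N : Subgroup G, N.Normal → ¬ p ∣ Nat.card N → N = ⊥)
    (P : Sylow p G)
    (hab : ∀ x y : G, x ∈ P → y ∈ P → x * y = y * x)
    (hexp : ∀ x ∈ P, x ^ p = 1) :
    frattini G = ⊥ := by
  have : Fact p.Prime := ⟨hp⟩
  have : Group.IsNilpotent (frattini G) := frattini_nilpotent
  have hΦP : frattini G ≤ P := (isPGroup_of_isNilpotent hOp' (frattini G)).le_sylow_of_normal P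
  have : IsMulCommutative P := ⟨⟨fun x y => Subtype.ext (hab x y x.2 y.2)⟩⟩
  have : IsMulCommutative (frattini G) :=
    ⟨⟨fun x y => Subtype.ext (hab x y (hΦP x.2) (hΦP y.2))⟩⟩
  obtain ⟨π, hπ⟩ := MonoidHom.exists_leftInverse_of_injective_of_pow_eq_one
    (fun x : P => Subtype.ext (hexp x x.2)) (inclusion hΦP) (inclusion_injective hΦP)
  have hcop : (Nat.card (frattini G)).Coprime (P : Subgroup G).index :=
    P.card_coprime_index.coprime_dvd_left (card_dvd_of_le hΦP)
  obtain ⟨K, hK⟩ := exists_isCompl_of_le_of_retraction hΦP π hπ hcop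
  have hK_top : K = ⊤ := frattini_nongenerating (by rw [sup_comm]; exact hK.codisjoint.eq_top)
  exact disjoint_top.mp (hK_top ▸ hK.disjoint)
end

section
/- Let p be a prime, n a prime distinct from p, and q a prime power with p^d = (q^n - 1)/(q - 1) and d > 1 and p > 2. Then a Sylow p-subgroup of PSL(n,q) is cyclic of order p^d. -/
/-!
Write `q = |F|`. Since `p ^ d = 1 + q + ⋯ + q ^ (n - 1)`, we have `q ^ n ≡ 1` but `q ≢ 1`
modulo `p` (otherwise the sum is `≡ n`), so `q` has order exactly `n` modulo `p`. Hence in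
`|GL(n,q)| = ∏ᵢ (q ^ n - q ^ i)` only the factor `q ^ n - 1 = p ^ d (q - 1)` is divisible by `p`, and
the `p`-part of `|PSL(n,q)|` is at most `p ^ d`. Conversely, an element of order `p ^ d` in
`𝔽_{q^n}ˣ` has norm `1`, so multiplication by it is an element of `SL(n,q)` of order `p ^ d`. The
centre of `SL(n,q)` has order dividing `q - 1`, prime to `p`, so its image in `PSL(n,q)` still has
order `p ^ d`: it generates a Sylow `p`-subgroup.
-/

open Finset Matrix

theorem ZMod.natCast_eq_one_iff_dvd_sub_one {p q : ℕ} (hq : q ≠ 0) :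
    (q : ZMod p) = 1 ↔ p ∣ q - 1 := by
  rw [← ZMod.natCast_eq_zero_iff, Nat.cast_sub (Nat.one_le_iff_ne_zero.mpr hq), Nat.cast_one,
    sub_eq_zero]

theorem Nat.factorization_pow_mul_of_not_dvd {p m : ℕ} (hp : p.Prime) (hm : ¬p ∣ m) (d : ℕ) :
    (p ^ d * m).factorization p = d := by
  rw [Nat.factorization_mul (pow_ne_zero d hp.ne_zero) (by rintro rfl; exact hm (dvd_zero p)),
    Finsupp.add_apply, hp.factorization_pow, Finsupp.single_eq_same,
    Nat.factorization_eq_zero_of_not_dvd hm, add_zero]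

theorem orderOf_natCast_eq_of_dvd_geom_sum {p q n : ℕ} [Fact p.Prime] (hn : n.Prime)
    (hnp : n ≠ p) (hdvd : p ∣ ∑ i ∈ range n, q ^ i) : orderOf (q : ZMod p) = n := by
  have := Fact.mk hn
  have hsum : ∑ i ∈ range n, (q : ZMod p) ^ i = 0 := by
    exact_mod_cast (ZMod.natCast_eq_zero_iff _ p).mpr hdvd
  refine orderOf_eq_prime ?_ fun h1 => hnp ?_
  · rw [← sub_eq_zero, ← geom_sum_mul, hsum, zero_mul]
  · rw [h1] at hsum
    simp only [one_pow, sum_const, card_range, nsmul_eq_mul, mul_one,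
      ZMod.natCast_eq_zero_iff] at hsum
    exact ((Nat.prime_dvd_prime_iff_eq Fact.out hn).mp hsum).symm

theorem factorization_card_GL_eq {F : Type*} [Field F] [Fintype F] {n p : ℕ} [NeZero n]
    [Fact p.Prime] (h : orderOf (Fintype.card F : ZMod p) = n) :
    (Nat.card (GL (Fin n) F)).factorization p = (Fintype.card F ^ n - 1).factorization p := by
  set q := Fintype.card F
  have hqn : (q : ZMod p) ^ n = 1 := h ▸ pow_orderOf_eq_one _
  have hq_pow_lt (i : Fin n) : q ^ (i : ℕ) < q ^ n :=
    Nat.pow_lt_pow_right Fintype.one_lt_card i.2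
  rw [card_GL_field, Nat.factorization_prod fun i _ => (Nat.sub_pos_of_lt (hq_pow_lt i)).ne',
    Finset.sum_apply', Finset.sum_eq_single 0]
  · simp
  · intro i _ hi
    apply Nat.factorization_eq_zero_of_not_dvd
    rw [← ZMod.natCast_eq_zero_iff, Nat.cast_sub (hq_pow_lt i).le, Nat.cast_pow, Nat.cast_pow,
      hqn, sub_eq_zero, eq_comm]
    exact pow_ne_one_of_lt_orderOf (Fin.val_ne_zero_iff.mpr hi) (h ▸ i.2)
  · simp

theorem orderOf_mk_eq_of_coprime {G : Type*} [Group G] (N : Subgroup G) [N.Normal] (g : G)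
    (h : (orderOf g).Coprime (Nat.card N)) : orderOf (g : G ⧸ N) = orderOf g := by
  set k := orderOf (g : G ⧸ N)
  have hgk : g ^ k ∈ N := by
    rw [← QuotientGroup.eq_one_iff, QuotientGroup.mk_pow, pow_orderOf_eq_one]
  have hgk1 : g ^ k = 1 := orderOf_eq_one_iff.mp <|
    Nat.eq_one_of_dvd_coprimes h (orderOf_pow_dvd k) (N.orderOf_dvd_natCard hgk)
  exact Nat.dvd_antisymm (orderOf_map_dvd (QuotientGroup.mk' N) g)
    (orderOf_dvd_of_pow_eq_one hgk1)

theorem Sylow.isCyclic_of_orderOf_eq_card {G : Type*} [Group G] [Finite G] {p : ℕ}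
    [Fact p.Prime] (P : Sylow p G) (g : G) (hg : orderOf g = Nat.card P) : IsCyclic P := by
  have hpg : IsPGroup p (Subgroup.zpowers g) := by
    rw [← Nat.card_zpowers, P.card_eq_multiplicity] at hg
    exact .of_card hg
  obtain ⟨Q, hQ⟩ := hpg.exists_le_sylow
  have : IsCyclic Q :=
    _root_.isCyclic_of_orderOf_eq_card (⟨g, hQ (Subgroup.mem_zpowers g)⟩ : Q) <| by
      rw [Subgroup.orderOf_mk, hg, Q.card_eq_multiplicity, P.card_eq_multiplicity]
  exact isCyclic_of_surjective _ (Sylow.equiv Q P).surjective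

namespace Matrix.SpecialLinearGroup

theorem card_center_dvd_card_sub_one {ι F : Type*} [Fintype ι] [DecidableEq ι] [Field F]
    [Fintype F] : Nat.card (Subgroup.center (SpecialLinearGroup ι F)) ∣ Fintype.card F - 1 := by
  rw [Nat.card_congr (center_equiv_rootsOfUnity (n := ι) (R := F)).toEquiv,
    ← Nat.card_eq_fintype_card (α := F), ← Nat.card_units]
  exact Subgroup.card_subgroup_dvd_card _

theorem factorization_card_quotient_center_le {F : Type*} [Field F] [Fintype F] {n p : ℕ}
    [NeZero n] [Fact p.Prime] (h : orderOf (Fintype.card F : ZMod p) = n) :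
    (Nat.card (SpecialLinearGroup (Fin n) F ⧸ Subgroup.center _)).factorization p ≤
      (Fintype.card F ^ n - 1).factorization p := by
  have hdvd : Nat.card (SpecialLinearGroup (Fin n) F ⧸ Subgroup.center _) ∣
      Nat.card (GL (Fin n) F) :=
    (Subgroup.card_quotient_dvd_card _).trans (Subgroup.card_dvd_of_injective _ toGL_injective)
  rw [← factorization_card_GL_eq h]
  exact (Nat.factorization_le_iff_dvd Nat.card_pos.ne' Nat.card_pos.ne').mpr hdvd p

theorem exists_orderOf_eq_of_dvd (F : Type*) [Field F] [Fintype F] (n : ℕ) [NeZero n] {m : ℕ}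
    (hm : m ∣ Fintype.card F ^ n - 1) (hcop : m.Coprime (Fintype.card F - 1)) :
    ∃ z : SpecialLinearGroup (Fin n) F, orderOf z = m := by
  obtain ⟨r, hr⟩ := CharP.exists F
  have := Fact.mk (CharP.char_is_prime F r)
  let K := FiniteField.Extension F r n
  let b := Module.finBasisOfFinrankEq F K (FiniteField.finrank_extension F r n)
  obtain ⟨x, hx⟩ : ∃ x : Kˣ, orderOf x = m := by
    obtain ⟨g, hg⟩ := IsCyclic.exists_ofOrder_eq_natCard (α := Kˣ)
    rw [Nat.card_units, FiniteField.natCard_extension, Nat.card_eq_fintype_card] at hg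
    have hg0 : orderOf g ≠ 0 :=
      hg ▸ (Nat.sub_pos_of_lt (Nat.one_lt_pow (NeZero.ne n) Fintype.one_lt_card)).ne'
    exact ⟨g ^ (orderOf g / m), orderOf_pow_orderOf_div hg0 (hg ▸ hm)⟩
  -- the norm of `x` lies in `Fˣ`, whose order `q - 1` is prime to `orderOf x`
  have hnorm : Algebra.norm F (x : K) = 1 := by
    have : Units.map (Algebra.norm F : K →* F) x = 1 := orderOf_eq_one_iff.mp <|
      Nat.eq_one_of_dvd_coprimes hcop (hx ▸ orderOf_map_dvd _ x)
        (Nat.card_eq_fintype_card (α := F) ▸ Nat.card_units F ▸ orderOf_dvd_natCard _)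
    simpa [Units.ext_iff] using this
  let z : SpecialLinearGroup (Fin n) F :=
    ⟨Algebra.leftMulMatrix b x, by rw [← Algebra.norm_eq_matrix_det, hnorm]⟩
  refine ⟨z, ?_⟩
  rw [← orderOf_injective _ coeMonoidHom_injective, ← hx, ← orderOf_units]
  exact orderOf_injective (Algebra.leftMulMatrix b : K →* Matrix (Fin n) (Fin n) F)
    (Algebra.leftMulMatrix_injective b) (x : K)

theorem exists_orderOf_quotient_center_eq_of_dvd (F : Type*) [Field F] [Fintype F] (n : ℕ)
    [NeZero n] {m : ℕ} (hm : m ∣ Fintype.card F ^ n - 1) (hcop : m.Coprime (Fintype.card F - 1)) :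
    ∃ w : SpecialLinearGroup (Fin n) F ⧸ Subgroup.center _, orderOf w = m := by
  obtain ⟨z, hz⟩ := exists_orderOf_eq_of_dvd F n hm hcop
  refine ⟨z, (orderOf_mk_eq_of_coprime _ z ?_).trans hz⟩
  exact hz ▸ hcop.coprime_dvd_right card_center_dvd_card_sub_one

end Matrix.SpecialLinearGroup

theorem stmt_10_general (p n d : ℕ) (hp : p.Prime) (hn : n.Prime) (hne : n ≠ p)
    (hd : 1 < d)
    (F : Type*) [Field F] [Fintype F] (q : ℕ) (hq : q = Fintype.card F)
    (hpd : p ^ d = (q ^ n - 1) / (q - 1))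
    (P : Sylow p (Matrix.SpecialLinearGroup (Fin n) F ⧸
      Subgroup.center (Matrix.SpecialLinearGroup (Fin n) F))) :
    IsCyclic P ∧ Nat.card P = p ^ d := by
  have := Fact.mk hp
  have := NeZero.mk hn.ne_zero
  subst hq
  have hq2 : 2 ≤ Fintype.card F := Fintype.one_lt_card
  have hmul : Fintype.card F ^ n - 1 = p ^ d * (Fintype.card F - 1) := by
    rw [hpd, Nat.div_mul_cancel (Nat.sub_one_dvd_pow_sub_one _ _)]
  have horder : orderOf (Fintype.card F : ZMod p) = n := by
    refine orderOf_natCast_eq_of_dvd_geom_sum hn hne ?_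
    rw [Nat.geomSum_eq hq2, ← hpd]
    exact dvd_pow_self p (by omega)
  have hpq : ¬p ∣ Fintype.card F - 1 := by
    rw [← ZMod.natCast_eq_one_iff_dvd_sub_one (by omega), ← orderOf_eq_one_iff, horder]
    exact hn.one_lt.ne'
  obtain ⟨w, hw⟩ := SpecialLinearGroup.exists_orderOf_quotient_center_eq_of_dvd F n
    (hmul ▸ dvd_mul_right _ _) (.pow_left d ((Nat.Prime.coprime_iff_not_dvd hp).mpr hpq))
  have hval : (Nat.card (SpecialLinearGroup (Fin n) F ⧸ Subgroup.center _)).factorization p = d :=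
    le_antisymm
      ((SpecialLinearGroup.factorization_card_quotient_center_le horder).trans_eq
        (hmul ▸ Nat.factorization_pow_mul_of_not_dvd hp hpq d))
      ((hp.pow_dvd_iff_le_factorization Nat.card_pos.ne').mp (hw ▸ orderOf_dvd_natCard w))
  have hP : Nat.card P = p ^ d := by rw [P.card_eq_multiplicity, hval]
  exact ⟨P.isCyclic_of_orderOf_eq_card w (hw.trans hP.symm), hP⟩

/-- Let `p` be a prime, `n` a prime distinct from `p`, and `q` a prime power (the
cardinality of a finite field `F`) with `p^d = (q^n - 1)/(q - 1)`, `d > 1` and `p > 2`.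
Then a Sylow `p`-subgroup of `PSL(n,q)` is cyclic of order `p^d`. -/
theorem stmt_10 (p n d : ℕ) (hp : p.Prime) (hn : n.Prime) (hne : n ≠ p)
    (hd : 1 < d) (hp2 : 2 < p)
    (F : Type*) [Field F] [Fintype F] (q : ℕ) (hq : q = Fintype.card F)
    (hpd : p ^ d = (q ^ n - 1) / (q - 1))
    (P : Sylow p (Matrix.SpecialLinearGroup (Fin n) F ⧸
      Subgroup.center (Matrix.SpecialLinearGroup (Fin n) F))) :
    IsCyclic P ∧ Nat.card P = p ^ d :=
  stmt_10_general p n d hp hn hne hd F q hq hpd P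
end
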